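/- For every natural number m and every k ≤ m, the quantity ρ_m^k := C_{m-k}/C_m is non-increasing in m: if k ≤ m ≤ n then C_{n-k}/C_n ≤ C_{m-k}/C_m. -/

import Mathlib

/-!
A positive sequence whose successive ratios `a (n + 1) / a n` increase is log-convex, so
`a (n - k) / a n`, a product of `k` consecutive inverse ratios ending at `n`, decreases in `n`.
For Catalan numbers `C (n + 1) / C n = 2 (2n + 1) / (n + 2) = 4 - 6 / (n + 2)` is increasing.
-/

section LogConvex

variable {K : Type*} [Field K] [LinearOrder K] [IsStrictOrderedRing K] {a : ℕ → K}

theorem div_succ_le_div_of_monotone_succ_div (hpos : ∀ n, 0 < a n)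
    (hmono : Monotone fun n => a (n + 1) / a n) {j n : ℕ} (hjn : j ≤ n) :
    a (j + 1) / a (n + 1) ≤ a j / a n := by
  have hratio : a (j + 1) / a j ≤ a (n + 1) / a n := hmono hjn
  rw [div_le_div_iff₀ (hpos _) (hpos _)] at hratio ⊢
  linarith

theorem antitone_sub_div_of_monotone_succ_div (hpos : ∀ n, 0 < a n)
    (hmono : Monotone fun n => a (n + 1) / a n) {k m n : ℕ} (hkm : k ≤ m) (hmn : m ≤ n) :
    a (n - k) / a n ≤ a (m - k) / a m := by
  induction n, hmn using Nat.le_induction with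
  | base => exact le_rfl
  | succ n _ ih =>
    have hnk : n + 1 - k = n - k + 1 := by omega
    calc a (n + 1 - k) / a (n + 1) = a (n - k + 1) / a (n + 1) := by rw [hnk]
      _ ≤ a (n - k) / a n := div_succ_le_div_of_monotone_succ_div hpos hmono (Nat.sub_le n k)
      _ ≤ a (m - k) / a m := ih

end LogConvex

theorem catalan_pos (n : ℕ) : 0 < catalan n :=
  Nat.pos_of_mul_pos_left <| (succ_mul_catalan_eq_centralBinom n).symm ▸ n.centralBinom_pos

theorem add_two_mul_catalan_succ (n : ℕ) :
    (n + 2) * catalan (n + 1) = 2 * (2 * n + 1) * catalan n := by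
  refine Nat.eq_of_mul_eq_mul_left n.succ_pos ?_
  calc (n + 1) * ((n + 2) * catalan (n + 1)) = (n + 1) * (n + 1).centralBinom := by
        rw [← succ_mul_catalan_eq_centralBinom (n + 1)]
    _ = 2 * (2 * n + 1) * n.centralBinom := n.succ_mul_centralBinom_succ
    _ = (n + 1) * (2 * (2 * n + 1) * catalan n) := by
        rw [← succ_mul_catalan_eq_centralBinom n]; ring

theorem catalan_succ_div_catalan (n : ℕ) :
    (catalan (n + 1) : ℚ) / catalan n = 2 * (2 * n + 1) / (n + 2) := by
  rw [div_eq_div_iff (by exact_mod_cast (catalan_pos n).ne') (by positivity)]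
  exact_mod_cast (mul_comm _ _).trans (add_two_mul_catalan_succ n)

theorem monotone_catalan_succ_div_catalan :
    Monotone fun n => (catalan (n + 1) : ℚ) / catalan n := by
  refine monotone_nat_of_le_succ fun n => ?_
  simp only [catalan_succ_div_catalan, Nat.cast_succ]
  rw [div_le_div_iff₀ (by positivity) (by positivity)]
  nlinarith

/-- For fixed k, the quantity ρ_m^k = C_{m-k}/C_m is non-increasing in m. -/
theorem catalan_rho_antitone_in_m (k m n : ℕ) (hkm : k ≤ m) (hmn : m ≤ n) :
    (catalan (n - k) : ℚ) / (catalan n : ℚ) ≤ (catalan (m - k) : ℚ) / (catalan m : ℚ) :=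
  antitone_sub_div_of_monotone_succ_div (a := fun i => (catalan i : ℚ))
    (fun i => by exact_mod_cast catalan_pos i)
    monotone_catalan_succ_div_catalan hkm hmn
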